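/- arXiv:math/9811156 — 3 statements merged into one kernel-verified Lean document; each statement's English description precedes it below -/
import Mathlib

section
/- The generating function χ^{1,p'}_{a,b,c}(L) (with weight given by the slanted-coordinate prescription) is invariant under reflection: χ^{1,p'}_{a,b,c}(L) = χ^{1,p'}_{p'-a,p'-b,p'-c}(L) for all L ≥ 0, 1 ≤ a,b < p', c = b ± 1. -/
open Finset

namespace Melzer

/-- Height of the path after `i` steps, starting at `a`; `true` = NE step (+1),
`false` = SE step (-1). -/
def ht (a : ℤ) {L : ℕ} (s : Fin L → Bool) (i : ℕ) : ℤ :=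
  a + ∑ j ∈ Finset.range i, (if h : j < L then (if s ⟨j, h⟩ then 1 else -1) else 0)

/-- `s` encodes a path in `P^{p'}_{a,b}(L)`: all heights lie in `[1, p'-1]` and
the path ends at `b`. -/
def isPath (p' : ℕ) (a b : ℤ) {L : ℕ} (s : Fin L → Bool) : Prop :=
  (∀ i ∈ Finset.range (L + 1), 1 ≤ ht a s i ∧ ht a s i ≤ (p' : ℤ) - 1) ∧ ht a s L = b

instance decIsPath (p' : ℕ) (a b : ℤ) {L : ℕ} (s : Fin L → Bool) :
    Decidable (isPath p' a b s) := by
  unfold isPath; infer_instance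

/-- Heights including the extra point `h_{L+1} = c`. -/
def htc (a : ℤ) {L : ℕ} (s : Fin L → Bool) (c : ℤ) (i : ℕ) : ℤ :=
  if i ≤ L then ht a s i else c

/-- Regime-III weight: `i/2` at each straight vertex, `0` at peaks. -/
def wtIII (a : ℤ) {L : ℕ} (s : Fin L → Bool) (c : ℤ) : ℚ :=
  ∑ i ∈ Finset.Icc 1 L, if htc a s c (i + 1) = htc a s c (i - 1) then 0 else (i : ℚ) / 2

/-- Regime-II weight: `i/2` at each peak vertex, `0` at straight vertices. -/
def wtII (a : ℤ) {L : ℕ} (s : Fin L → Bool) (c : ℤ) : ℚ :=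
  ∑ i ∈ Finset.Icc 1 L, if htc a s c (i + 1) = htc a s c (i - 1) then (i : ℚ) / 2 else 0

/-- Slanted-coordinate weight: at a peak-down vertex the contribution is
`x = (i - (h_i - a))/2`, at a peak-up vertex it is `y = (i + (h_i - a))/2`. -/
def wtSl (a : ℤ) {L : ℕ} (s : Fin L → Bool) (c : ℤ) : ℚ :=
  ∑ i ∈ Finset.Icc 1 L,
    if htc a s c (i + 1) = htc a s c (i - 1) then
      (if htc a s c (i - 1) < htc a s c i then ((i : ℚ) - ((ht a s i - a : ℤ) : ℚ)) / 2
       else ((i : ℚ) + ((ht a s i - a : ℤ) : ℚ)) / 2)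
    else 0

/-- `X^{p'}_L(a,b,c;q)`, the ABF (regime-III) finitised generating function. -/
noncomputable def X (p' : ℕ) (a b c : ℤ) (L : ℕ) (q : ℝ) : ℝ :=
  ∑ s ∈ Finset.univ.filter (fun s : Fin L → Bool => isPath p' a b s),
    q ^ ((wtIII a s c : ℚ) : ℝ)

/-- `x^{p'}_L(a,b,c;q)`, the parafermion (regime-II) finitised generating function. -/
noncomputable def xPara (p' : ℕ) (a b c : ℤ) (L : ℕ) (q : ℝ) : ℝ :=
  ∑ s ∈ Finset.univ.filter (fun s : Fin L → Bool => isPath p' a b s),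
    q ^ ((wtII a s c : ℚ) : ℝ)

/-- `χ^{1,p'}_{a,b,c}(L;q)`, generating function for the slanted-coordinate weight. -/
noncomputable def chiP (p' : ℕ) (a b c : ℤ) (L : ℕ) (q : ℝ) : ℝ :=
  ∑ s ∈ Finset.univ.filter (fun s : Fin L → Bool => isPath p' a b s),
    q ^ ((wtSl a s c : ℚ) : ℝ)

/-- `χ^{p'-1,p'}_{a,b,c}(L;q) = q^{(1/4)(a-b)(a-c)} X^{p'}_L(a,b,c;q)`. -/
noncomputable def chiABF (p' : ℕ) (a b c : ℤ) (L : ℕ) (q : ℝ) : ℝ :=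
  q ^ ((((a - b) * (a - c) : ℤ) : ℝ) / 4) * X p' a b c L q

/-- Extended direction sequence: index `0` is the pre-segment (NE iff `e = 1`),
indices `1..L` are the path segments, index `L+1` is the post-segment (NE iff `f = 0`). -/
def dirsExt {L : ℕ} (s : Fin L → Bool) (e f : ℕ) (i : ℕ) : Bool :=
  if i = 0 then e == 1
  else if h : i - 1 < L then s ⟨i - 1, h⟩
  else f == 0

def runsAux : Bool → ℕ → List Bool → List ℕ
  | _, n, [] => [n]
  | d, n, x :: xs => if x = d then runsAux d (n + 1) xs else n :: runsAux x 1 xs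

/-- Run lengths of a list of directions. -/
def runLengths : List Bool → List ℕ
  | [] => []
  | x :: xs => runsAux x 1 xs

/-- The `(e,f)`-striking sequence `(w_1, …, w_l)` of the path `s`. -/
def strike {L : ℕ} (s : Fin L → Bool) (e f : ℕ) : List ℕ :=
  let r := runLengths (List.ofFn fun i : Fin (L + 2) => dirsExt s e f (i : ℕ))
  r.mapIdx fun i x => x - (if i = 0 then 1 else 0) - (if i = r.length - 1 then 1 else 0)

/-- `m^{(e,f)}(h) = L - l + 2` where `l` is the length of the striking sequence. -/
def mEF {L : ℕ} (s : Fin L → Bool) (e f : ℕ) : ℤ :=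
  (L : ℤ) + 2 - (strike s e f).length

/-- The striking-sequence weight
`wt^{(e,f)}(h) = ∑_{i=2}^{l-1} (w_{i-1} + w_{i-3} + ⋯ + w_{1 + (i mod 2)})`. -/
def wtEF {L : ℕ} (s : Fin L → Bool) (e f : ℕ) : ℕ :=
  ∑ i ∈ Finset.Icc 2 ((strike s e f).length - 1), ∑ j ∈ Finset.Icc 1 (i - 1),
    if j % 2 = (i - 1) % 2 then (strike s e f).getD (j - 1) 0 else 0

/-- `χ^{1,p'}_{a,b,e,f}(L,m;q)`, the restricted generating function. -/
noncomputable def chiRes (p' : ℕ) (a b : ℤ) (e f : ℕ) (L : ℕ) (m : ℤ) (q : ℝ) : ℝ :=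
  ∑ s ∈ Finset.univ.filter
      (fun s : Fin L → Bool => isPath p' a b s ∧ mEF s e f = m),
    q ^ ((wtEF s e f : ℕ) : ℝ)

/-- The Gaussian (q-binomial) polynomial, via the Pascal recurrence. -/
noncomputable def qbinom (q : ℝ) : ℕ → ℕ → ℝ
  | _, 0 => 1
  | 0, _ + 1 => 0
  | A + 1, B + 1 => qbinom q A B + q ^ (B + 1) * qbinom q A (B + 1)

/-- The `B`-transform on striking sequences:
`(w_1, w_2, …, w_{l-1}, w_l) ↦ (w_1, w_2+1, …, w_{l-1}+1, w_l)`. -/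
def btransSeq (ws : List ℕ) : List ℕ :=
  ws.mapIdx fun i x => if i = 0 ∨ i = ws.length - 1 then x else x + 1

/-- Particle insertion on striking sequences:
`(w_1, w_2, …, w_l) ↦ (0, 1, w_1+1, w_2, …, w_l)`. -/
def insertP : List ℕ → List ℕ
  | [] => []
  | w :: rest => 0 :: 1 :: (w + 1) :: rest

/-- A single particle move: in the extended direction sequence a window
`(x, !x, x, x)` (two scoring vertices followed by a non-scoring one) is replaced
by `(x, x, !x, x)` (a non-scoring vertex followed by two scoring ones). -/
def moveRel {L : ℕ} (e f : ℕ) (s s' : Fin L → Bool) : Prop :=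
  ∃ j, j + 3 ≤ L + 1 ∧
    (∀ i, i ≠ j + 1 → i ≠ j + 2 → dirsExt s e f i = dirsExt s' e f i) ∧
    dirsExt s e f (j + 1) = !(dirsExt s e f j) ∧
    dirsExt s e f (j + 2) = dirsExt s e f j ∧
    dirsExt s e f (j + 3) = dirsExt s e f j ∧
    dirsExt s' e f (j + 1) = dirsExt s e f j ∧
    dirsExt s' e f (j + 2) = !(dirsExt s e f j)

def reflect {L : ℕ} : Equiv.Perm (Fin L → Bool) :=
  Equiv.piCongrRight fun _ => Equiv.boolNot

@[simp]
lemma reflect_apply {L : ℕ} (s : Fin L → Bool) (j : Fin L) : reflect s j = !s j := rfl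

lemma ht_reflect (p' a : ℤ) {L : ℕ} (s : Fin L → Bool) (i : ℕ) :
    ht (p' - a) (reflect s) i = p' - ht a s i := by
  have step_neg : ∀ j ∈ Finset.range i,
      (if h : j < L then (if reflect s ⟨j, h⟩ then (1 : ℤ) else -1) else 0)
        = -(if h : j < L then (if s ⟨j, h⟩ then 1 else -1) else 0) := by
    intro j _
    split_ifs <;> simp_all
  rw [ht, ht, Finset.sum_congr rfl step_neg, Finset.sum_neg_distrib]
  ring

lemma htc_reflect (p' a c : ℤ) {L : ℕ} (s : Fin L → Bool) (i : ℕ) :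
    htc (p' - a) (reflect s) (p' - c) i = p' - htc a s c i := by
  unfold htc
  split_ifs <;> simp [ht_reflect]

lemma ht_succ (a : ℤ) {L : ℕ} (s : Fin L → Bool) (k : ℕ) (hk : k < L) :
    ht a s (k + 1) = ht a s k + (if s ⟨k, hk⟩ then 1 else -1) := by
  unfold ht
  rw [Finset.sum_range_succ, dif_pos hk]
  ring

lemma htc_pred_ne (a c : ℤ) {L : ℕ} (s : Fin L → Bool) {i : ℕ} (h1 : 1 ≤ i) (h2 : i ≤ L) :
    htc a s c (i - 1) ≠ htc a s c i := by
  obtain ⟨k, rfl⟩ : ∃ k, i = k + 1 := ⟨i - 1, by omega⟩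
  rw [htc, htc, if_pos (by omega), if_pos h2, Nat.add_sub_cancel, ht_succ a s k (by omega)]
  split <;> omega

lemma isPath_reflect (p' : ℕ) (a b : ℤ) {L : ℕ} (s : Fin L → Bool) :
    isPath p' ((p' : ℤ) - a) ((p' : ℤ) - b) (reflect s) ↔ isPath p' a b s := by
  simp only [isPath, ht_reflect, Finset.mem_range]
  constructor <;>
    exact fun ⟨hbounds, hend⟩ => ⟨fun i hi => by have := hbounds i hi; omega, by omega⟩

/- Reflection swaps peak-down and peak-up vertices and negates `h_i - a`, so it
exchanges the slanted coordinates `x` and `y` of every peak. -/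
lemma wtSl_reflect (p' a c : ℤ) {L : ℕ} (s : Fin L → Bool) :
    wtSl (p' - a) (reflect s) (p' - c) = wtSl a s c := by
  refine Finset.sum_congr rfl fun i hi => ?_
  rw [Finset.mem_Icc] at hi
  have hne := htc_pred_ne a c s hi.1 hi.2
  simp only [htc_reflect, ht_reflect, sub_right_inj, sub_lt_sub_iff_left]
  split_ifs <;> first | rfl | omega | (push_cast; ring)

theorem statement2_general (p' L : ℕ) (a b c : ℤ)
    (q : ℝ) :
    chiP p' a b c L q = chiP p' ((p' : ℤ) - a) ((p' : ℤ) - b) ((p' : ℤ) - c) L q := by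
  refine Finset.sum_equiv reflect (fun s => ?_) (fun s _ => ?_)
  · simp [isPath_reflect]
  · rw [wtSl_reflect]

/-- Reflection symmetry: `χ^{1,p'}_{a,b,c}(L) = χ^{1,p'}_{p'-a,p'-b,p'-c}(L)`. -/
theorem statement2 (p' L : ℕ) (a b c : ℤ)
    (ha : 1 ≤ a ∧ a < (p' : ℤ)) (hb : 1 ≤ b ∧ b < (p' : ℤ))
    (hc : c = b + 1 ∨ c = b - 1)
    (q : ℝ) :
    chiP p' a b c L q = chiP p' ((p' : ℤ) - a) ((p' : ℤ) - b) ((p' : ℤ) - c) L q :=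
  statement2_general p' L a b c q

end Melzer
end

section
/- Let h be a path from a to b of length L with (e,f)-striking sequence and define wt^{(e,f)}(h) = Σ_{i=2}^{l-1} (w_{i-1} + w_{i-3} + ... down to w_1 or w_2 according to parity). If f = 0 set c = b+1 and if f = 1 set c = b-1; let h' be the same height sequence considered as an element of P^{p'}_{a,b,c}(L). Then wt(h') = wt^{(e,f)}(h), where wt is the slanted-coordinate weight. -/
open Finset

namespace Melzer

def incLast : List ℕ → List ℕ
  | [] => []
  | [a] => [a + 1]
  | a :: b :: xs => a :: incLast (b :: xs)

@[simp] lemma length_incLast (r : List ℕ) : (incLast r).length = r.length := by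
  induction r with
  | nil => rfl
  | cons a xs ih => cases xs with
    | nil => rfl
    | cons b ys => simpa [incLast] using ih

lemma getD_incLast (r : List ℕ) (k : ℕ) (hk : k + 1 < r.length) :
    (incLast r).getD k 0 = r.getD k 0 := by
  induction r generalizing k with
  | nil => rfl
  | cons a xs ih =>
    cases xs with
    | nil => simp at hk
    | cons b ys =>
      cases k with
      | zero => rfl
      | succ k => simpa [incLast] using ih k (by simpa using hk)

lemma runsAux_ne_nil (d : Bool) (n : ℕ) (xs : List Bool) : runsAux d n xs ≠ [] := by
  induction xs generalizing d n with
  | nil => simp [runsAux]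
  | cons x xs ih =>
    by_cases h : x = d <;> simp [runsAux, h, ih]

lemma getLastD_cons' (y : Bool) (ys : List Bool) (d : Bool) :
    (y :: ys).getLastD d = ys.getLastD y := by
  cases ys <;> simp [List.getLastD]

lemma incLast_cons (a : ℕ) (r : List ℕ) (h : r ≠ []) :
    incLast (a :: r) = a :: incLast r := by
  cases r with
  | nil => exact absurd rfl h
  | cons b xs => rfl

lemma runsAux_cons (d : Bool) (n : ℕ) (y : Bool) (ys : List Bool) :
    runsAux d n (y :: ys) = if y = d then runsAux d (n + 1) ys else n :: runsAux y 1 ys := rfl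

lemma runsAux_append (d : Bool) (n : ℕ) (xs : List Bool) (x : Bool) :
    runsAux d n (xs ++ [x]) =
      if xs.getLastD d = x then incLast (runsAux d n xs)
      else runsAux d n xs ++ [1] := by
  induction xs generalizing d n with
  | nil =>
    by_cases h : x = d <;> simp [runsAux, runsAux_cons, h, incLast, eq_comm]
  | cons y ys ih =>
    rw [getLastD_cons', List.cons_append, runsAux_cons, runsAux_cons]
    by_cases h : y = d
    · subst h; rw [if_pos rfl, if_pos rfl, ih]
    · rw [if_neg h, if_neg h, ih]
      by_cases h2 : ys.getLastD y = x
      · rw [if_pos h2, if_pos h2, incLast_cons _ _ (runsAux_ne_nil _ _ _)]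
      · rw [if_neg h2, if_neg h2, List.cons_append]

lemma getLastD_eq_getD (ys : List Bool) (y : Bool) :
    ys.getLastD y = (y :: ys).getD ys.length false := by
  induction ys generalizing y with
  | nil => rfl
  | cons z zs ih => rw [getLastD_cons']; simpa using ih z

lemma sum_range_getD (r : List ℕ) : ∑ j ∈ range r.length, r.getD j 0 = r.sum := by
  induction r with
  | nil => simp
  | cons a xs ih =>
    rw [List.length_cons, Finset.sum_range_succ']
    simp only [List.getD_cons_succ, List.getD_cons_zero, List.sum_cons, ih]
    omega

lemma runsAux_sum (d : Bool) (n : ℕ) (xs : List Bool) :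
    (runsAux d n xs).sum = n + xs.length := by
  induction xs generalizing d n with
  | nil => simp [runsAux]
  | cons x xs ih =>
    by_cases h : x = d <;> simp [runsAux, h, ih] <;> omega

lemma runsAux_getD0 (d : Bool) (n : ℕ) (xs : List Bool) :
    n ≤ (runsAux d n xs).getD 0 0 := by
  induction xs generalizing d n with
  | nil => simp [runsAux]
  | cons x xs ih =>
    by_cases h : x = d
    · simp only [runsAux, if_pos h]
      exact le_trans (Nat.le_succ n) (ih d (n+1))
    · simp [runsAux, h]




def S (t : List Bool) : ℕ :=
  ∑ i ∈ Icc 1 (t.length - 2),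
    if t.getD (i+1) false ≠ t.getD i false then
      ∑ j ∈ Finset.range i, (if t.getD (j+1) false ≠ t.getD i false then 1 else 0)
    else 0

def F (t : List Bool) : ℕ :=
  ∑ j ∈ Finset.range (t.length - 1),
    if t.getD (j+1) false ≠ t.getD (t.length - 1) false then 1 else 0

def T (r : List ℕ) : ℕ :=
  ∑ j ∈ Icc 1 (r.length - 1),
    if j % 2 = (r.length - 1) % 2 then (r.getD (j-1) 0 - if j = 1 then 1 else 0) else 0

def V (r : List ℕ) : ℕ :=
  ∑ i ∈ Icc 2 (r.length - 1), ∑ j ∈ Icc 1 (i-1),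
    if j % 2 = (i-1) % 2 then (r.getD (j-1) 0 - if j = 1 then 1 else 0) else 0

lemma getD_snoc_self {α : Type*} (l : List α) (x d : α) : (l ++ [x]).getD l.length d = x := by
  simp [List.getD_eq_getElem?_getD]

lemma runLengths_snoc (y : Bool) (ys : List Bool) (x : Bool) :
    runLengths ((y :: ys) ++ [x]) =
      if (y :: ys).getD ((y :: ys).length - 1) false = x then incLast (runLengths (y :: ys))
      else runLengths (y :: ys) ++ [1] := by
  have h1 : (y :: ys).getD ((y :: ys).length - 1) false = ys.getLastD y := by
    rw [getLastD_eq_getD]; simp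
  rw [h1]
  show runsAux y 1 (ys ++ [x]) = _
  rw [runsAux_append]
  rfl

lemma runLengths_sum (y : Bool) (ys : List Bool) :
    (runLengths (y :: ys)).sum = (y :: ys).length := by
  show (runsAux y 1 ys).sum = _
  rw [runsAux_sum]; simp [Nat.add_comm]

lemma runLengths_getD0 (y : Bool) (ys : List Bool) :
    1 ≤ (runLengths (y :: ys)).getD 0 0 := runsAux_getD0 y 1 ys

lemma T_incLast (r : List ℕ) : T (incLast r) = T r := by
  unfold T
  rw [length_incLast]
  refine Finset.sum_congr rfl fun j hj => ?_
  rw [Finset.mem_Icc] at hj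
  rw [getD_incLast _ _ (by omega)]

lemma V_incLast (r : List ℕ) : V (incLast r) = V r := by
  unfold V
  rw [length_incLast]
  refine Finset.sum_congr rfl fun i hi => Finset.sum_congr rfl fun j hj => ?_
  rw [Finset.mem_Icc] at hi hj
  rw [getD_incLast _ _ (by omega)]

lemma T_snoc (r : List ℕ) (hr : r ≠ []) (h0 : 1 ≤ r.getD 0 0) :
    T (r ++ [1]) + T r + 1 = r.sum := by
  obtain ⟨k, hk⟩ : ∃ k, r.length = k + 1 := by
    cases r with
    | nil => exact absurd rfl hr
    | cons a as => exact ⟨as.length, rfl⟩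
  have e1 : (r ++ [1]).length - 1 = k + 1 := by simp [hk]
  have h1 : T (r ++ [1]) = ∑ j ∈ Icc 1 (k+1),
      if j % 2 = (k+1) % 2 then (r.getD (j-1) 0 - if j = 1 then 1 else 0) else 0 := by
    unfold T
    rw [e1]
    refine Finset.sum_congr rfl fun j hj => ?_
    rw [Finset.mem_Icc] at hj
    rw [List.getD_append _ _ _ _ (by omega)]
  have h2' : T r = ∑ j ∈ Icc 1 (k+1),
      if j % 2 = k % 2 then (r.getD (j-1) 0 - if j = 1 then 1 else 0) else 0 := by
    unfold T
    rw [hk]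
    simp only [Nat.add_sub_cancel]
    rw [Finset.sum_Icc_succ_top (by omega), if_neg (by omega), add_zero]
  have h3 : T (r ++ [1]) + T r = ∑ j ∈ Icc 1 (k+1),
      (r.getD (j-1) 0 - if j = 1 then 1 else 0) := by
    rw [h1, h2', ← Finset.sum_add_distrib]
    refine Finset.sum_congr rfl fun j hj => ?_
    by_cases h : j % 2 = (k+1) % 2
    · have h' : ¬ (j % 2 = k % 2) := by omega
      rw [if_pos h, if_neg h', add_zero]
    · have h' : j % 2 = k % 2 := by omega
      rw [if_neg h, if_pos h', zero_add]
  have key : ∑ j ∈ Icc 1 (k+1), r.getD (j-1) 0 = r.sum := by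
    rw [← Finset.Ico_add_one_right_eq_Icc, Finset.sum_Ico_eq_sum_range]
    have e2 : k + 1 + 1 - 1 = k + 1 := rfl
    rw [e2, ← sum_range_getD r, hk]
    refine Finset.sum_congr rfl fun i _ => ?_
    have e3 : 1 + i - 1 = i := by omega
    rw [e3]
  have hsplit : ∀ (g : ℕ → ℕ), ∑ j ∈ Icc 1 (k+1), g j = g 1 + ∑ j ∈ Icc 2 (k+1), g j := by
    intro g
    have e4 : Icc 1 (k+1) = insert 1 (Icc 2 (k+1)) := by
      ext m
      simp only [Finset.mem_Icc, Finset.mem_insert]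
      omega
    rw [e4, Finset.sum_insert (by simp)]
  have h4 : ∑ j ∈ Icc 1 (k+1), (r.getD (j-1) 0 - if j = 1 then 1 else 0)
      = (r.getD 0 0 - 1) + ∑ j ∈ Icc 2 (k+1), (r.getD (j-1) 0 - if j = 1 then 1 else 0) := by
    rw [hsplit (fun j => r.getD (j-1) 0 - if j = 1 then 1 else 0)]
    congr 1
  have h5 : ∑ j ∈ Icc 1 (k+1), r.getD (j-1) 0
      = r.getD 0 0 + ∑ j ∈ Icc 2 (k+1), r.getD (j-1) 0 :=
    hsplit (fun j => r.getD (j-1) 0)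
  have h6 : ∑ j ∈ Icc 2 (k+1), (r.getD (j-1) 0 - if j = 1 then 1 else 0)
      = ∑ j ∈ Icc 2 (k+1), r.getD (j-1) 0 := by
    refine Finset.sum_congr rfl fun j hj => ?_
    rw [Finset.mem_Icc] at hj
    rw [if_neg (by omega), Nat.sub_zero]
  omega

lemma F_snoc (t : List Bool) (x : Bool) (ht : t ≠ []) :
    F (t ++ [x]) = ∑ j ∈ Finset.range (t.length - 1),
      (if t.getD (j+1) false ≠ x then 1 else 0) := by
  obtain ⟨k, hk⟩ : ∃ k, t.length = k + 1 := by
    cases t with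
    | nil => exact absurd rfl ht
    | cons a as => exact ⟨as.length, rfl⟩
  have e1 : (t ++ [x]).length - 1 = k + 1 := by simp [hk]
  unfold F
  rw [e1]
  have e2 : (t ++ [x]).getD (k + 1) false = x := by
    rw [← hk]; exact getD_snoc_self t x false
  rw [e2, Finset.sum_range_succ, e2, if_neg (by simp), add_zero, hk]
  simp only [Nat.add_sub_cancel]
  refine Finset.sum_congr rfl fun j hj => ?_
  rw [Finset.mem_range] at hj
  rw [List.getD_append _ _ _ _ (by omega)]

lemma F_snoc_same (t : List Bool) (x : Bool) (ht : t ≠ [])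
    (hx : t.getD (t.length - 1) false = x) : F (t ++ [x]) = F t := by
  rw [F_snoc t x ht]
  unfold F
  exact Finset.sum_congr rfl fun j _ => by rw [hx]

lemma F_snoc_diff (t : List Bool) (x : Bool) (ht : t ≠ [])
    (hx : t.getD (t.length - 1) false ≠ x) : F (t ++ [x]) + F t + 1 = t.length := by
  rw [F_snoc t x ht]
  unfold F
  rw [← Finset.sum_add_distrib]
  have h1 : ∀ j, ((if t.getD (j+1) false ≠ x then 1 else 0)
      + (if t.getD (j+1) false ≠ t.getD (t.length - 1) false then 1 else 0)) = 1 := by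
    intro j
    rcases Bool.eq_false_or_eq_true (t.getD (j+1) false) with h | h <;>
      rcases Bool.eq_false_or_eq_true x with h2 | h2 <;>
      rcases Bool.eq_false_or_eq_true (t.getD (t.length - 1) false) with h3 | h3 <;>
      simp_all
  rw [Finset.sum_congr rfl fun j _ => h1 j, Finset.sum_const, smul_eq_mul, mul_one]
  cases t with
  | nil => exact absurd rfl ht
  | cons a as => simp

lemma F_eq_T (t : List Bool) (ht : t ≠ []) : F t = T (runLengths t) := by
  induction t using List.reverseRecOn with
  | nil => exact absurd rfl ht
  | append_singleton t x ih =>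
    cases t with
    | nil =>
      show F [x] = T [1]
      unfold F T
      simp
    | cons y ys =>
      rw [runLengths_snoc]
      by_cases hx : (y :: ys).getD ((y :: ys).length - 1) false = x
      · rw [if_pos hx, T_incLast, ← ih (by simp), F_snoc_same _ _ (by simp) hx]
      · rw [if_neg hx]
        have hT := T_snoc (runLengths (y :: ys)) (by
          show runsAux y 1 ys ≠ []
          exact runsAux_ne_nil _ _ _) (runLengths_getD0 y ys)
        have hF := F_snoc_diff (y :: ys) x (by simp) hx
        rw [runLengths_sum] at hT
        rw [ih (by simp)] at hF
        omega

lemma S_snoc (t : List Bool) (x : Bool) (ht : t ≠ []) :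
    S (t ++ [x]) = S t + (if x = t.getD (t.length - 1) false then 0 else F t) := by
  obtain ⟨k, hk⟩ : ∃ k, t.length = k + 1 := by
    cases t with
    | nil => exact absurd rfl ht
    | cons a as => exact ⟨as.length, rfl⟩
  have e1 : (t ++ [x]).length - 2 = k := by simp [hk]
  cases k with
  | zero =>
    have hS1 : S (t ++ [x]) = 0 := by unfold S; rw [e1]; simp
    have hS2 : S t = 0 := by unfold S; rw [hk]; simp
    have hF : F t = 0 := by unfold F; rw [hk]; simp
    rw [hS1, hS2, hF]
    simp
  | succ m =>
    unfold S
    rw [e1, hk]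
    simp only [Nat.add_sub_cancel]
    have e2 : m + 1 - 1 = m := rfl
    rw [Finset.sum_Icc_succ_top (by omega)]
    have hsame : ∀ i ∈ Icc 1 m,
        (if (t ++ [x]).getD (i+1) false ≠ (t ++ [x]).getD i false then
          ∑ j ∈ Finset.range i, (if (t ++ [x]).getD (j+1) false ≠ (t ++ [x]).getD i false then 1 else 0)
        else 0)
        = (if t.getD (i+1) false ≠ t.getD i false then
          ∑ j ∈ Finset.range i, (if t.getD (j+1) false ≠ t.getD i false then 1 else 0)
        else 0) := by
      intro i hi
      rw [Finset.mem_Icc] at hi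
      rw [List.getD_append _ _ _ _ (by omega), List.getD_append _ _ _ _ (by omega)]
      refine if_congr Iff.rfl (Finset.sum_congr rfl fun j hj => ?_) rfl
      rw [Finset.mem_range] at hj
      rw [List.getD_append _ _ _ _ (by omega)]
    rw [Finset.sum_congr rfl hsame]
    congr 1
    have e3 : (t ++ [x]).getD (m + 1 + 1) false = x := by
      have h' : m + 1 + 1 = t.length := by omega
      rw [h']; exact getD_snoc_self t x false
    have e4 : (t ++ [x]).getD (m + 1) false = t.getD (m + 1) false :=
      List.getD_append _ _ _ _ (by omega)
    rw [e3, e4]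
    by_cases hx : x = t.getD (m + 1) false
    · rw [if_neg (by simp [hx]), if_pos hx]
    · rw [if_pos hx, if_neg hx]
      unfold F
      have hL : t.length - 1 = m + 1 := by omega
      rw [hL]
      refine Finset.sum_congr rfl fun j hj => ?_
      rw [Finset.mem_range] at hj
      rw [List.getD_append _ _ _ _ (by omega)]

lemma V_snoc (r : List ℕ) : V (r ++ [1]) = V r + T r := by
  rcases r with _ | ⟨a, _ | ⟨b, rs⟩⟩
  · unfold V T; simp
  · unfold V T; simp
  · set r := a :: b :: rs with hr
    obtain ⟨m, hm⟩ : ∃ m, r.length = m + 2 := ⟨rs.length, by simp [hr]⟩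
    have e1 : (r ++ [1]).length - 1 = m + 2 := by simp [hm]
    unfold V T
    rw [e1, hm]
    have e2 : m + 2 - 1 = m + 1 := rfl
    rw [e2, Finset.sum_Icc_succ_top (by omega)]
    congr 1
    · refine Finset.sum_congr rfl fun i hi => Finset.sum_congr rfl fun j hj => ?_
      rw [Finset.mem_Icc] at hi hj
      rw [List.getD_append _ _ _ _ (by omega)]
    · rw [e2]
      refine Finset.sum_congr rfl fun j hj => ?_
      rw [Finset.mem_Icc] at hj
      rw [List.getD_append _ _ _ _ (by omega)]

lemma S_eq_V (t : List Bool) : S t = V (runLengths t) := by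
  induction t using List.reverseRecOn with
  | nil =>
    unfold S V runLengths
    simp
  | append_singleton t x ih =>
    cases t with
    | nil =>
      show S [x] = V [1]
      unfold S V
      simp
    | cons y ys =>
      rw [S_snoc _ _ (by simp), runLengths_snoc]
      by_cases hx : (y :: ys).getD ((y :: ys).length - 1) false = x
      · rw [if_pos hx, V_incLast, ih, if_pos hx.symm, add_zero]
      · rw [if_neg hx, V_snoc, ih, F_eq_T _ (by simp),
          if_neg (fun h => hx h.symm)]


section Bridge

variable {L : ℕ}

lemma wtEF_eq_V (s : Fin L → Bool) (e f : ℕ) :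
    wtEF s e f = V (runLengths (List.ofFn fun i : Fin (L+2) => dirsExt s e f (i : ℕ))) := by
  unfold wtEF V
  set r := runLengths (List.ofFn fun i : Fin (L+2) => dirsExt s e f (i : ℕ)) with hr
  have hst : strike s e f
      = r.mapIdx fun i x => x - (if i = 0 then 1 else 0) - (if i = r.length - 1 then 1 else 0) := rfl
  have hlen : (strike s e f).length = r.length := by rw [hst, List.length_mapIdx]
  rw [hlen]
  refine Finset.sum_congr rfl fun i hi => Finset.sum_congr rfl fun j hj => ?_
  rw [Finset.mem_Icc] at hi hj
  by_cases hpar : j % 2 = (i - 1) % 2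
  · rw [if_pos hpar, if_pos hpar]
    have hjr : j - 1 < r.length := by omega
    have hjs : j - 1 < (strike s e f).length := by rw [hlen]; exact hjr
    rw [List.getD_eq_getElem _ _ hjs, List.getD_eq_getElem _ _ hjr]
    have : (strike s e f)[j-1]'hjs
        = r[j-1]'hjr - (if j - 1 = 0 then 1 else 0) - (if j - 1 = r.length - 1 then 1 else 0) := by
      simp only [hst, List.getElem_mapIdx]
    rw [this, if_neg (by omega : ¬ (j - 1 = r.length - 1)), Nat.sub_zero]
    by_cases hj1 : j = 1
    · rw [if_pos (by omega), if_pos hj1]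
    · rw [if_neg (by omega), if_neg hj1, Nat.sub_zero]
  · rw [if_neg hpar, if_neg hpar]

lemma S_ofFn_eq (s : Fin L → Bool) (e f : ℕ) :
    S (List.ofFn fun i : Fin (L+2) => dirsExt s e f (i : ℕ))
      = ∑ i ∈ Finset.Icc 1 L,
          if dirsExt s e f (i+1) ≠ dirsExt s e f i then
            ∑ j ∈ Finset.range i, (if dirsExt s e f (j+1) ≠ dirsExt s e f i then 1 else 0)
          else 0 := by
  unfold S
  set t := List.ofFn fun i : Fin (L+2) => dirsExt s e f (i : ℕ) with htt
  have hget : ∀ i, i < L + 2 → t.getD i false = dirsExt s e f i := by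
    intro i hi
    rw [htt, List.getD_eq_getElem _ _ (by simp; omega), List.getElem_ofFn]
  have hlen : t.length - 2 = L := by simp [htt]
  rw [hlen]
  refine Finset.sum_congr rfl fun i hi => ?_
  rw [Finset.mem_Icc] at hi
  rw [hget i (by omega), hget (i+1) (by omega)]
  refine if_congr Iff.rfl (Finset.sum_congr rfl fun j hj => ?_) rfl
  rw [Finset.mem_range] at hj
  rw [hget (j+1) (by omega)]

end Bridge

/-- The striking-sequence weight equals the slanted-coordinate weight of the
path with the extra point `c` determined by `f`. -/
theorem statement7 (p' L : ℕ) (a b c : ℤ) (s : Fin L → Bool)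
    (hpath : isPath p' a b s) (e f : ℕ) (he : e ≤ 1) (hf : f ≤ 1)
    (hc : c = b + (if f = 0 then 1 else -1))
    (hc1 : 1 ≤ c) (hc2 : c ≤ (p' : ℤ) - 1) :
    wtSl a s c = (wtEF s e f : ℚ) := by
  have hb : ht a s L = b := hpath.2
  have hdir : ∀ (k : ℕ) (hk : k < L), dirsExt s e f (k+1) = s ⟨k, hk⟩ := by
    intro k hk
    unfold dirsExt
    rw [if_neg (by omega), dif_pos (show k + 1 - 1 < L by omega)]
    rfl
  have hstep : ∀ k, k < L + 1 → htc a s c (k+1) - htc a s c k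
      = (if dirsExt s e f (k+1) then 1 else -1) := by
    intro k hk
    by_cases hkL : k < L
    · have h1 : htc a s c (k+1) = ht a s (k+1) := if_pos (by omega)
      have h2 : htc a s c k = ht a s k := if_pos (by omega)
      rw [h1, h2, hdir k hkL]
      unfold ht
      rw [Finset.sum_range_succ, dif_pos hkL]
      ring
    · have hkL' : k = L := by omega
      rw [hkL']
      have h1 : htc a s c (L+1) = c := if_neg (by omega)
      have h2 : htc a s c L = b := by rw [htc, if_pos (le_refl L), hb]
      have e1 : dirsExt s e f (L+1) = (f == 0) := by
        unfold dirsExt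
        rw [if_neg (by omega), dif_neg (by omega)]
      rw [h1, h2, e1, hc]
      interval_cases f <;> simp
  have hcount : ∀ i, i ≤ L → ((ht a s i - a : ℤ) : ℚ)
      = ∑ j ∈ Finset.range i, (if dirsExt s e f (j+1) then (1:ℚ) else -1) := by
    intro i hiL
    have h0 : (ht a s i - a : ℤ)
        = ∑ j ∈ Finset.range i, (if h : j < L then (if s ⟨j, h⟩ then 1 else -1) else 0) := by
      unfold ht; ring
    have h1 : (ht a s i - a : ℤ)
        = ∑ j ∈ Finset.range i, (if dirsExt s e f (j+1) then (1:ℤ) else -1) := by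
      rw [h0]
      refine Finset.sum_congr rfl fun j hj => ?_
      rw [Finset.mem_range] at hj
      rw [dif_pos (show j < L by omega), hdir j (by omega)]
    rw [h1]
    push_cast
    refine Finset.sum_congr rfl fun j _ => ?_
    cases dirsExt s e f (j+1) <;> norm_num
  have hS : wtSl a s c
      = (S (List.ofFn fun i : Fin (L+2) => dirsExt s e f (i : ℕ)) : ℚ) := by
    rw [S_ofFn_eq]
    unfold wtSl
    rw [Nat.cast_sum]
    refine Finset.sum_congr rfl fun i hi => ?_
    rw [Finset.mem_Icc] at hi
    obtain ⟨hi1, hiL⟩ := hi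
    have hA := hstep i (by omega)
    have hB := hstep (i-1) (by omega)
    rw [show i - 1 + 1 = i from by omega] at hB
    by_cases hpk : dirsExt s e f (i+1) = dirsExt s e f i
    · have hnp : ¬ (htc a s c (i+1) = htc a s c (i-1)) := by
        rw [hpk] at hA
        cases hd2 : dirsExt s e f i <;> rw [hd2] at hA hB <;> norm_num at hA hB <;> omega
      rw [if_neg hnp, if_neg (by simp [hpk]), Nat.cast_zero]
    · have hpeak : htc a s c (i+1) = htc a s c (i-1) := by
        cases hd1 : dirsExt s e f (i+1) <;> cases hd2 : dirsExt s e f i <;>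
          rw [hd1] at hA <;> rw [hd2] at hB <;>
          first
          | (exact absurd rfl (hd1 ▸ hd2 ▸ hpk))
          | (norm_num at hA hB; omega)
      rw [if_pos hpeak, if_pos (show dirsExt s e f (i+1) ≠ dirsExt s e f i from hpk)]
      cases hdi : dirsExt s e f i
      · rw [hdi] at hB
        norm_num at hB
        rw [if_neg (show ¬ (htc a s c (i-1) < htc a s c i) by omega)]
        have key : ∀ j, (if dirsExt s e f (j+1) then (1:ℚ) else -1)
            = 2 * (if dirsExt s e f (j+1) ≠ false then (1:ℚ) else 0) - 1 := by
          intro j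
          cases hj : dirsExt s e f (j+1) <;> norm_num
        have hval : ((ht a s i - a : ℤ) : ℚ)
            = 2 * (∑ j ∈ Finset.range i,
                (if dirsExt s e f (j+1) ≠ false then (1:ℚ) else 0)) - i := by
          rw [hcount i hiL, Finset.sum_congr rfl fun j _ => key j,
            Finset.sum_sub_distrib, ← Finset.mul_sum, Finset.sum_const, Finset.card_range]
          simp
        rw [hval]
        push_cast
        ring
      · rw [hdi] at hB
        norm_num at hB
        rw [if_pos (show htc a s c (i-1) < htc a s c i by omega)]
        have key : ∀ j, (if dirsExt s e f (j+1) then (1:ℚ) else -1)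
            = 1 - 2 * (if dirsExt s e f (j+1) ≠ true then (1:ℚ) else 0) := by
          intro j
          cases hj : dirsExt s e f (j+1) <;> norm_num
        have hval : ((ht a s i - a : ℤ) : ℚ)
            = i - 2 * (∑ j ∈ Finset.range i,
                (if dirsExt s e f (j+1) ≠ true then (1:ℚ) else 0)) := by
          rw [hcount i hiL, Finset.sum_congr rfl fun j _ => key j,
            Finset.sum_sub_distrib, ← Finset.mul_sum, Finset.sum_const, Finset.card_range]
          simp
        rw [hval]
        push_cast
        ring
  rw [hS, S_eq_V, wtEF_eq_V]

end Melzer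
end

section
/- Under the B-transform (h ↦ ĥ with striking sequence (w_1, w_2+1, ..., w_{l-1}+1, w_l)^{(e,f)}): wt^{(e,f)}(ĥ) = wt^{(e,f)}(h) + (1/4)((L̂ - m̂)² - δ_{e+f,1}), where L̂ = L(ĥ) and m̂ = m^{(e,f)}(ĥ). -/
open Finset

namespace Melzer

/-! ### Auxiliary lemmas for statement13 -/

lemma runsAux_length_pos (xs : List Bool) : ∀ d n, 1 ≤ (runsAux d n xs).length := by
  induction xs with
  | nil => intro d n; simp [runsAux]
  | cons x xs ih =>
    intro d n
    rw [runsAux]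
    split_ifs
    · exact ih d (n+1)
    · simp

lemma runsAux_length_mod (xs : List Bool) :
    ∀ d n, (runsAux d n xs).length % 2 = if xs.getLastD d = d then 1 else 0 := by
  induction xs with
  | nil => intro d n; simp [runsAux]
  | cons x xs ih =>
    intro d n
    rw [List.getLastD_cons, runsAux]
    by_cases h : x = d
    · subst h; simp [ih x (n+1)]
    · simp only [h, if_false, List.length_cons]
      have h1 := ih x 1
      have hxd : (xs.getLastD x = d) ↔ ¬(xs.getLastD x = x) := by
        cases x <;> cases d <;> simp_all
      split_ifs with hc
      · rw [if_neg (hxd.mp hc)] at h1; omega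
      · rw [if_pos (not_not.mp (fun hx => hc (hxd.mpr hx)))] at h1; omega

/-- Weight of a striking sequence, as a function of the list. -/
def Wlist (ws : List ℕ) : ℕ :=
  ∑ i ∈ Finset.Icc 2 (ws.length - 1), ∑ j ∈ Finset.Icc 1 (i - 1),
    if j % 2 = (i - 1) % 2 then ws.getD (j - 1) 0 else 0

lemma wtEF_eq_Wlist {L : ℕ} (s : Fin L → Bool) (e f : ℕ) :
    wtEF s e f = Wlist (strike s e f) := rfl

lemma count_parity (m : ℕ) :
    (∑ j ∈ Finset.Icc 2 m, if j % 2 = m % 2 then (1:ℕ) else 0) = m / 2 ∧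
    (∑ j ∈ Finset.Icc 2 m, if j % 2 = m % 2 then (0:ℕ) else 1) = (m - 1) / 2 := by
  induction m with
  | zero => simp
  | succ m ih =>
    rcases Nat.lt_or_ge m 1 with hm | hm
    · interval_cases m <;> simp
    · have h2 : 2 ≤ m + 1 := by omega
      have flip1 : ∀ j ∈ Finset.Icc 2 m,
          (if j % 2 = (m+1) % 2 then (1:ℕ) else 0) = (if j % 2 = m % 2 then 0 else 1) := by
        intro j _; split_ifs <;> omega
      have flip2 : ∀ j ∈ Finset.Icc 2 m,
          (if j % 2 = (m+1) % 2 then (0:ℕ) else 1) = (if j % 2 = m % 2 then 1 else 0) := by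
        intro j _; split_ifs <;> omega
      constructor
      · rw [Finset.sum_Icc_succ_top h2, Finset.sum_congr rfl flip1, ih.2,
          if_pos rfl]
        omega
      · rw [Finset.sum_Icc_succ_top h2, Finset.sum_congr rfl flip2, ih.1,
          if_pos rfl]
        omega

lemma length_btransSeq (ws : List ℕ) : (btransSeq ws).length = ws.length := by
  simp [btransSeq]

lemma Wlist_btrans (ws : List ℕ) :
    Wlist (btransSeq ws) = Wlist ws + ∑ i ∈ Finset.Icc 2 (ws.length - 1), (i - 1) / 2 := by
  unfold Wlist
  rw [length_btransSeq, ← Finset.sum_add_distrib]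
  refine Finset.sum_congr rfl ?_
  intro i hi
  simp only [Finset.mem_Icc] at hi
  have hl3 : 3 ≤ ws.length := by omega
  have hstep : ∀ j ∈ Finset.Icc 1 (i-1),
      (if j % 2 = (i-1) % 2 then (btransSeq ws).getD (j-1) 0 else 0)
        = (if j % 2 = (i-1) % 2 then ws.getD (j-1) 0 else 0)
          + (if j % 2 = (i-1) % 2 then (if j = 1 then 0 else 1) else 0) := by
    intro j hj
    simp only [Finset.mem_Icc] at hj
    have hjl : j - 1 < ws.length := by omega
    have hjl' : j - 1 < (btransSeq ws).length := by rw [length_btransSeq]; exact hjl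
    have hgd : (btransSeq ws).getD (j-1) 0 = ws.getD (j-1) 0 + (if j = 1 then 0 else 1) := by
      rw [List.getD_eq_getElem _ _ hjl', List.getD_eq_getElem _ _ hjl]
      simp only [btransSeq, List.getElem_mapIdx]
      rcases eq_or_ne j 1 with h1 | h1
      · simp [h1]
      · have hnot : ¬(j - 1 = 0 ∨ j - 1 = ws.length - 1) := by omega
        simp [hnot, h1]
    rw [hgd]; split_ifs <;> omega
  rw [Finset.sum_congr rfl hstep, Finset.sum_add_distrib]
  congr 1
  have hsplit : Finset.Icc 1 (i-1) = insert 1 (Finset.Icc 2 (i-1)) := by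
    ext x; simp only [Finset.mem_Icc, Finset.mem_insert]; omega
  rw [hsplit, Finset.sum_insert (by simp)]
  have hone : (if 1 % 2 = (i-1) % 2 then (if (1:ℕ) = 1 then (0:ℕ) else 1) else 0) = 0 := by
    split_ifs <;> omega
  rw [hone, zero_add]
  have hcongr : ∀ j ∈ Finset.Icc 2 (i-1),
      (if j % 2 = (i-1) % 2 then (if j = 1 then (0:ℕ) else 1) else 0)
        = (if j % 2 = (i-1) % 2 then 1 else 0) := by
    intro j hj
    simp only [Finset.mem_Icc] at hj
    have : j ≠ 1 := by omega
    simp [this]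
  rw [Finset.sum_congr rfl hcongr, (count_parity (i-1)).1]

lemma Tsum_base (n : ℕ) :
    4 * ((∑ i ∈ Finset.Icc 2 (n + 1), (i - 1) / 2 : ℕ) : ℤ) = (n:ℤ)^2 - (n % 2 : ℕ) := by
  induction n with
  | zero => simp
  | succ n ih =>
    rw [show n + 1 + 1 = (n + 1) + 1 from rfl,
      Finset.sum_Icc_succ_top (by omega : 2 ≤ n + 1 + 1)]
    push_cast
    push_cast at ih
    have hq : (((n + 1 + 1 - 1) / 2 : ℕ) : ℤ) * 4
        = 2 * (n:ℤ) + 1 + ((n % 2 : ℕ) : ℤ) - (((n+1) % 2 : ℕ) : ℤ) := by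
      omega
    have hx : ((n:ℤ) + 1)^2 = (n:ℤ)^2 + 2 * n + 1 := by ring
    rw [hx]
    push_cast at hq
    linarith

lemma Tsum_int (l : ℕ) (hl : 1 ≤ l) :
    4 * ((∑ i ∈ Finset.Icc 2 (l - 1), (i - 1) / 2 : ℕ) : ℤ)
      = ((l:ℤ) - 2)^2 - (l % 2 : ℕ) := by
  rcases eq_or_ne l 1 with rfl | h1
  · norm_num
  · obtain ⟨n, rfl⟩ : ∃ n, l = n + 2 := ⟨l - 2, by omega⟩
    have := Tsum_base n
    have h2 : n + 2 - 1 = n + 1 := by omega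
    have h3 : (n + 2) % 2 = n % 2 := by omega
    rw [h2, h3, this]
    push_cast
    ring

lemma strike_length_mod {L : ℕ} (s : Fin L → Bool) (e f : ℕ) (he : e ≤ 1) (hf : f ≤ 1) :
    (strike s e f).length % 2 = (if e + f = 1 then 1 else 0)
      ∧ 1 ≤ (strike s e f).length := by
  have hlen : (strike s e f).length
      = (runLengths (List.ofFn fun i : Fin (L + 2) => dirsExt s e f (i : ℕ))).length := by
    unfold strike
    simp [List.length_mapIdx]
  rw [List.ofFn_succ] at hlen
  have hhead : dirsExt s e f ((0 : Fin (L+2)) : ℕ) = (e == 1) := by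
    simp [dirsExt]
  rw [hhead] at hlen
  set t := List.ofFn fun i : Fin (L+1) => dirsExt s e f ((i.succ : Fin (L+2)) : ℕ) with ht
  have hrl : runLengths ((e == 1) :: t) = runsAux (e == 1) 1 t := rfl
  rw [hrl] at hlen
  have hmod := runsAux_length_mod t (e == 1) 1
  have hpos := runsAux_length_pos t (e == 1) 1
  have htlast : (List.ofFn fun i : Fin (L+1) =>
      dirsExt s e f ((i.succ : Fin (L+2)) : ℕ)).getLastD (e == 1) = (f == 0) := by
    have htne : (List.ofFn fun i : Fin (L+1) =>
        dirsExt s e f ((i.succ : Fin (L+2)) : ℕ)) ≠ [] := by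
      simp [List.ofFn_eq_nil_iff]
    rw [List.getLastD_eq_getLast?, List.getLast?_eq_getLast htne,
      Option.getD_some, List.getLast_ofFn]
    simp only [Fin.val_succ, Nat.add_sub_cancel, dirsExt]
    have h1 : ¬ (L + 1 = 0) := by omega
    have h2 : ¬ (L + 1 - 1 < L) := by omega
    simp [h1, h2]
  rw [← ht] at htlast
  rw [htlast] at hmod
  refine ⟨?_, by omega⟩
  rw [hlen, hmod]
  interval_cases e <;> interval_cases f <;> simp

/-- Weight change under the `B`-transform:
`wt^{(e,f)}(ĥ) = wt^{(e,f)}(h) + (1/4)((L̂ - m̂)² - δ_{e+f,1})`. -/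
theorem statement13 (p' L Lhat : ℕ) (a b : ℤ) (e f : ℕ) (he : e ≤ 1) (hf : f ≤ 1)
    (s : Fin L → Bool) (hs : isPath p' a b s) (hL : 0 < L ∨ e = f)
    (shat : Fin Lhat → Bool)
    (hLhat : (Lhat : ℤ) = 2 * (L : ℤ) - mEF s e f)
    (hstrike : strike shat e f = btransSeq (strike s e f)) :
    (wtEF shat e f : ℚ)
      = (wtEF s e f : ℚ)
        + ((((Lhat : ℚ) - ((mEF shat e f : ℤ) : ℚ)) ^ 2
            - (if e + f = 1 then 1 else 0)) / 4) := by
  have hlen : (strike shat e f).length = (strike s e f).length := by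
    rw [hstrike, length_btransSeq]
  obtain ⟨hpar, hl1⟩ := strike_length_mod s e f he hf
  set l := (strike s e f).length with hlval
  set T : ℕ := ∑ i ∈ Finset.Icc 2 (l - 1), (i - 1) / 2 with hT
  have hw : wtEF shat e f = wtEF s e f + T := by
    rw [wtEF_eq_Wlist, wtEF_eq_Wlist, hstrike, Wlist_btrans]
  have hmhat : ((mEF shat e f : ℤ) : ℚ) = (Lhat : ℚ) + 2 - l := by
    unfold mEF
    rw [hlen]
    push_cast
    ring
  have hZ := Tsum_int l hl1
  have hZQ : 4 * (T : ℚ) = ((l:ℚ) - 2)^2 - ((l % 2 : ℕ) : ℚ) := by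
    rw [hT]
    have h2 := congrArg (fun z : ℤ => (z : ℚ)) hZ
    simp only [Int.cast_mul, Int.cast_sub, Int.cast_pow, Int.cast_natCast,
      Int.cast_ofNat] at h2
    convert h2 using 2 <;> norm_num
  have hdelta : (if e + f = 1 then (1:ℚ) else 0) = ((l % 2 : ℕ) : ℚ) := by
    rw [hpar]
    split_ifs <;> simp
  rw [hw, hdelta]
  push_cast
  rw [hmhat]
  have hsq : ((Lhat : ℚ) - ((Lhat : ℚ) + 2 - l))^2 = ((l:ℚ) - 2)^2 := by ring
  rw [hsq]
  linarith

end Melzer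
end
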